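/- arXiv:2005.11062 — 6 statements merged into one kernel-verified Lean document; each statement's English description precedes it below -/
import Mathlib

section
/- A matrix with entries in {0,1} such that every column contains at most two nonzero entries, and whose rows can be partitioned into two sets R1 and R2 so that each column has at most one nonzero entry in R1 and at most one nonzero entry in R2, is totally unimodular. -/
/-!
Induction on the size of a square submatrix `B`. If some column of `B` has at most one nonzero
entry, expanding along it gives `det B = ±(entry) · (minor)`, and the minor is a smaller square
submatrix. Otherwise every column of `B` has at least two nonzero entries, hence contains all
nonzero entries of the corresponding column of `A`, so the rows of `B`, weighted by `+1` on the
first class and `-1` on the second, sum to zero and `det B = 0`.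
-/

open Finset

lemma Finset.sum_eq_card_filter_ne_zero {ι R : Type*} [AddCommMonoidWithOne R] [DecidableEq R]
    (s : Finset ι) {f : ι → R} (hf : ∀ i ∈ s, f i = 0 ∨ f i = 1) :
    ∑ i ∈ s, f i = #{i ∈ s | f i ≠ 0} := by
  rw [← sum_boole]
  refine sum_congr rfl fun i hi => ?_
  rcases hf i hi with h | h <;> simp [h]

lemma Function.Injective.mem_range_of_card_filter_le {ι m : Type*} [Fintype ι] [Fintype m]
    {f : ι → m} (hf : f.Injective) {p : m → Prop} [DecidablePred p]
    (hcard : #{r | p r} ≤ #{i | p (f i)}) {r : m} (hr : p r) : r ∈ Set.range f := by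
  have hsub : ({i | p (f i)} : Finset ι).map ⟨f, hf⟩ ⊆ ({r | p r} : Finset m) := by
    rintro _ hr
    obtain ⟨i, hi, rfl⟩ := mem_map.mp hr
    simpa using hi
  have heq := eq_of_subset_of_card_le hsub (by simpa using hcard)
  obtain ⟨i, -, rfl⟩ := mem_map.mp (heq.ge (by simpa using hr))
  exact ⟨i, rfl⟩

namespace Matrix

variable {m n R : Type*} [CommRing R]

lemma det_eq_zero_of_vecMul_eq_zero [Fintype m] [DecidableEq m] {A : Matrix m m R} {c : m → R}
    (hc : c ᵥ* A = 0) {i : m} (hi : IsUnit (c i)) : A.det = 0 := by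
  have h := det_updateRow_sum A i c
  rw [← vecMul_eq_sum, hc, det_eq_zero_of_row_eq_zero i (fun j => by simp), smul_eq_mul] at h
  exact hi.mul_right_eq_zero.mp h.symm

lemma det_succ_mem_range_signType_cast_of_col {k : ℕ} {B : Matrix (Fin (k + 1)) (Fin (k + 1)) R}
    {i₀ j : Fin (k + 1)} (hcol : ∀ i ≠ i₀, B i j = 0) (hB : B i₀ j ∈ Set.range SignType.cast)
    (hminor : (B.submatrix i₀.succAbove j.succAbove).det ∈ Set.range SignType.cast) :
    B.det ∈ Set.range SignType.cast := by
  rw [det_succ_column B j,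
    Fintype.sum_eq_single i₀ fun i hi => by rw [hcol i hi, mul_zero, zero_mul]]
  change _ ∈ MonoidHom.mrange SignType.castHom.toMonoidHom
  refine mul_mem (mul_mem (pow_mem ?_ _) hB) hminor
  exact ⟨-1, by simp⟩

theorem isTotallyUnimodular_of_col_balanced [Fintype m] [DecidableEq R] (A : Matrix m n R)
    (w : m → R) (hw : ∀ i, IsUnit (w i)) (hA : ∀ i j, A i j ∈ Set.range SignType.cast)
    (hcol : ∀ j, #{i | A i j ≠ 0} ≤ 2) (hbal : ∀ j, #{i | A i j ≠ 0} = 2 → ∑ i, w i * A i j = 0) :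
    A.IsTotallyUnimodular := by
  intro k
  induction k with
  | zero => intro f g _ _; exact ⟨1, by simp⟩
  | succ k ih =>
    intro f g hf hg
    by_cases hsparse : ∃ j, #{i | A (f i) (g j) ≠ 0} ≤ 1
    · obtain ⟨j, hj⟩ := hsparse
      obtain ⟨i₀, hi₀⟩ := card_le_one_iff_subset_singleton.mp hj
      refine det_succ_mem_range_signType_cast_of_col (i₀ := i₀) (j := j) (fun i hi => ?_)
        (hA _ _) ?_
      · by_contra h
        exact hi (mem_singleton.mp (hi₀ (by simpa using h)))
      · rw [submatrix_submatrix]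
        exact ih _ _ (hf.comp Fin.succAbove_right_injective) (hg.comp Fin.succAbove_right_injective)
    · push Not at hsparse
      refine ⟨0, (det_eq_zero_of_vecMul_eq_zero (c := w ∘ f) (i := 0) ?_ (hw _)).symm⟩
      funext j
      have hle : #{i | A (f i) (g j) ≠ 0} ≤ #{r | A r (g j) ≠ 0} :=
        card_le_card_of_injOn f (fun i hi => by simpa using hi) hf.injOn
      have hrange : ∀ r, A r (g j) ≠ 0 → r ∈ Set.range f := fun _ =>
        hf.mem_range_of_card_filter_le ((hcol (g j)).trans (hsparse j))
      calc (w ∘ f ᵥ* A.submatrix f g) j = ∑ r, w r * A r (g j) :=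
            Fintype.sum_of_injective f hf _ _
              (fun r hr => by rw [not_imp_comm.mp (hrange r) hr, mul_zero]) (fun _ => rfl)
        _ = 0 := hbal _ (le_antisymm (hcol _) (hle.trans' (hsparse j)))

end Matrix

theorem stmt_1_general {R C : Type*} [Fintype R]
    (A : Matrix R C ℚ)
    (h01 : ∀ i j, A i j = 0 ∨ A i j = 1)
    (hcol : ∀ j : C, (Finset.univ.filter (fun i => A i j ≠ 0)).card ≤ 2)
    (r : R → Bool)
    (hpart : ∀ j : C,
      (Finset.univ.filter (fun i => A i j ≠ 0 ∧ r i = true)).card ≤ 1 ∧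
      (Finset.univ.filter (fun i => A i j ≠ 0 ∧ r i = false)).card ≤ 1) :
    A.IsTotallyUnimodular := by
  refine A.isTotallyUnimodular_of_col_balanced (fun i => if r i then 1 else -1)
    (fun i => by split <;> simp) (fun i j => ?_) hcol (fun j hj => ?_)
  · rcases h01 i j with h | h
    exacts [⟨0, by simp [h]⟩, ⟨1, by simp [h]⟩]
  have hsplit : #{i | A i j ≠ 0 ∧ r i = true} + #{i | A i j ≠ 0 ∧ r i = false} = 2 := by
    rw [← hj, ← filter_filter, ← filter_filter]
    simpa using card_filter_add_card_filter_not (s := {i | A i j ≠ 0}) (fun i => r i = true)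
  have hbalanced : #{i | A i j ≠ 0 ∧ r i = true} = #{i | A i j ≠ 0 ∧ r i = false} := by
    have := hpart j
    omega
  calc ∑ i, (if r i then 1 else -1) * A i j
      = ∑ i with r i = true, A i j - ∑ i with ¬r i = true, A i j := by
        simp [ite_mul, sum_ite, sub_eq_add_neg]
    _ = 0 := by
        rw [sum_eq_card_filter_ne_zero _ fun i _ => h01 i j,
          sum_eq_card_filter_ne_zero _ fun i _ => h01 i j, filter_filter, filter_filter]
        simp only [Bool.not_eq_true, and_comm (a := r _ = _), hbalanced, sub_self]

/-- A `{0,1}`-matrix in which every column has at most two nonzero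
entries and whose rows can be partitioned into two classes such that every
column has at most one nonzero entry in each class is totally unimodular. -/
theorem stmt_1 {R C : Type*} [Fintype R] [DecidableEq R]
    (A : Matrix R C ℚ)
    (h01 : ∀ i j, A i j = 0 ∨ A i j = 1)
    (hcol : ∀ j : C, (Finset.univ.filter (fun i => A i j ≠ 0)).card ≤ 2)
    (r : R → Bool)
    (hpart : ∀ j : C,
      (Finset.univ.filter (fun i => A i j ≠ 0 ∧ r i = true)).card ≤ 1 ∧
      (Finset.univ.filter (fun i => A i j ≠ 0 ∧ r i = false)).card ≤ 1) :
    A.IsTotallyUnimodular :=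
  stmt_1_general A h01 hcol r hpart
end

section
/- If the constraint matrix A of a linear program {z : A z <= b, z >= 0} is totally unimodular and b is an integer vector, then the feasible region {z in R^n : A z <= b, z >= 0} is nonempty if and only if it contains an integer point. -/
/-!
Stack `-1` under `A`: the polyhedron becomes `{x | M x ≤ c}` with `M` still totally unimodular
and with trivial kernel. In such a polyhedron any feasible point can be moved, along a direction
orthogonal to its tight rows, until one more row becomes tight and the span of the tight rows
grows; a feasible point whose tight rows span everything is a vertex. At a vertex, `n` linearly
independent tight rows form a square submatrix `B` of `M` with `B x = c`; its determinant is
`±1`, so `B` is invertible over `ℤ` and `x = B⁻¹ c` is integral.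
-/

open Matrix

section LinearAlgebra

variable {K ι κ : Type*} [Field K] [Fintype κ]

lemma exists_linearIndependent_comp_of_span_eq_top (v : ι → κ → K)
    (hv : Submodule.span K (Set.range v) = ⊤) :
    ∃ g : κ → ι, LinearIndependent K (v ∘ g) := by
  obtain ⟨κ', a, -, hspan, hli⟩ := exists_linearIndependent' K v
  let b : Module.Basis κ' K (κ → K) := .mk hli (by rw [hspan, hv])
  let e : κ' ≃ κ := b.indexEquiv (Pi.basisFun K κ)
  exact ⟨a ∘ e.symm, hli.comp e.symm e.symm.injective⟩

lemma exists_ne_zero_forall_dotProduct_eq_zero [DecidableEq κ] {V : Submodule K (κ → K)}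
    (hV : V ≠ ⊤) : ∃ u ≠ 0, ∀ v ∈ V, u ⬝ᵥ v = 0 := by
  obtain ⟨φ, hφ, hVφ⟩ := Submodule.exists_dual_map_eq_bot_of_lt_top hV.lt_top inferInstance
  refine ⟨(dotProductEquiv K κ).symm φ, by simpa using hφ, fun v hv => ?_⟩
  rw [← dotProductEquiv_apply_apply, LinearEquiv.apply_symm_apply]
  simpa [hVφ] using Submodule.mem_map_of_mem (f := φ) hv

end LinearAlgebra

namespace Matrix

variable {R ι κ : Type*}

lemma map_intCast_mulVec [Fintype κ] [Ring R] (M : Matrix ι κ ℤ) (z : κ → ℤ) :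
    M.map (Int.cast : ℤ → R) *ᵥ (Int.cast ∘ z) = Int.cast ∘ (M *ᵥ z) := by
  ext i
  simpa using ((Int.castRingHom R).map_mulVec M z i).symm

lemma IsTotallyUnimodular.isUnit_det_of_ne_zero [Fintype κ] [DecidableEq κ] [CommRing R]
    {A : Matrix κ κ R} (hA : A.IsTotallyUnimodular) (h : A.det ≠ 0) : IsUnit A.det := by
  obtain ⟨s, hs⟩ := (isTotallyUnimodular_iff_fintype A).mp hA κ id id
  rw [submatrix_id_id] at hs
  rcases s with _ | _ | _
  · exact absurd hs.symm (by simpa using h)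
  · simp [← hs]
  · simp [← hs]

lemma IsTotallyUnimodular.fromRows_neg_one [CommRing R] [DecidableEq κ] {A : Matrix ι κ R}
    (hA : A.IsTotallyUnimodular) : (fromRows A (-1 : Matrix κ κ R)).IsTotallyUnimodular :=
  hA.fromRows_unitlike fun _ j => ⟨j, .neg, by
    ext k
    simp only [neg_apply, one_apply, Pi.single_apply, eq_comm]
    split_ifs <;> simp⟩

lemma fromRows_neg_one_mulVec_injective [Fintype κ] [DecidableEq κ] [Ring R]
    (A : Matrix ι κ R) :
    Function.Injective (fromRows A (-1 : Matrix κ κ R)).mulVec := fun u v h => by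
  simpa [fromRows_mulVec, neg_mulVec] using congrArg (· ∘ Sum.inr) h

lemma fromRows_neg_one_mulVec_le_iff [Fintype κ] [DecidableEq κ] [Ring R] [PartialOrder R]
    [IsOrderedRing R] (A : Matrix ι κ R) (b : ι → R) (v : κ → R) :
    fromRows A (-1 : Matrix κ κ R) *ᵥ v ≤ Sum.elim b 0 ↔ A *ᵥ v ≤ b ∧ 0 ≤ v := by
  simp [fromRows_mulVec, neg_mulVec, Sum.elim_le_elim_iff]

end Matrix

section Polyhedra

variable {ι κ : Type*} [Fintype κ]

def tightRowSpan {R : Type*} [Semiring R] (M : Matrix ι κ R) (c : ι → R) (x : κ → R) :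
    Submodule R (κ → R) :=
  Submodule.span R (Set.range fun i : {i // (M *ᵥ x) i = c i} => M i)

variable {𝕜 : Type*} [Field 𝕜] [LinearOrder 𝕜] [IsStrictOrderedRing 𝕜]

lemma exists_ratio_test [Fintype ι] (M : Matrix ι κ 𝕜) {c : ι → 𝕜} {x u : κ → 𝕜}
    (hx : M *ᵥ x ≤ c) (hu : ∃ i, 0 < (M *ᵥ u) i) :
    ∃ t : 𝕜, M *ᵥ (x + t • u) ≤ c ∧
      ∃ i, 0 < (M *ᵥ u) i ∧ (M *ᵥ (x + t • u)) i = c i := by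
  classical
  obtain ⟨i₁, hi₁⟩ := hu
  have hS : (Finset.univ.filter fun i => 0 < (M *ᵥ u) i).Nonempty :=
    ⟨i₁, by simpa using hi₁⟩
  set ratio : ι → 𝕜 := fun i => (c i - (M *ᵥ x) i) / (M *ᵥ u) i
  obtain ⟨i₀, hi₀, ht⟩ := Finset.exists_mem_eq_inf' hS ratio
  set t := (Finset.univ.filter fun i => 0 < (M *ᵥ u) i).inf' hS ratio
  have hmove : ∀ i, (M *ᵥ (x + t • u)) i = (M *ᵥ x) i + t * (M *ᵥ u) i := by
    simp [mulVec_add, mulVec_smul]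
  have ht_le : ∀ i, 0 < (M *ᵥ u) i → t * (M *ᵥ u) i ≤ c i - (M *ᵥ x) i := fun i hi =>
    (le_div_iff₀ hi).mp (Finset.inf'_le ratio (by simpa using hi))
  have ht_nonneg : 0 ≤ t := Finset.le_inf' hS ratio fun i hi =>
    div_nonneg (sub_nonneg.mpr (hx i)) (Finset.mem_filter.mp hi).2.le
  simp only [Finset.mem_filter, Finset.mem_univ, true_and] at hi₀
  refine ⟨t, fun i => ?_, i₀, hi₀, ?_⟩
  · rw [hmove]
    rcases lt_or_ge 0 ((M *ᵥ u) i) with hi | hi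
    · linarith [ht_le i hi]
    · nlinarith [hx i]
  · rw [hmove, ht, div_mul_cancel₀ _ hi₀.ne']
    ring

lemma exists_tightRowSpan_lt [Fintype ι] [DecidableEq κ] (M : Matrix ι κ 𝕜)
    (hM : Function.Injective M.mulVec) {c : ι → 𝕜} {x : κ → 𝕜} (hx : M *ᵥ x ≤ c)
    (hspan : tightRowSpan M c x ≠ ⊤) :
    ∃ y, M *ᵥ y ≤ c ∧ tightRowSpan M c x < tightRowSpan M c y := by
  obtain ⟨u, hu, hperp⟩ := exists_ne_zero_forall_dotProduct_eq_zero hspan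
  have hrow : ∀ w i, (M *ᵥ w) i = w ⬝ᵥ M i := fun w i => dotProduct_comm _ _
  obtain ⟨w, hwperp, hw⟩ :
      ∃ w : κ → 𝕜, (∀ v ∈ tightRowSpan M c x, w ⬝ᵥ v = 0) ∧
        ∃ i, 0 < (M *ᵥ w) i := by
    obtain ⟨i, hi⟩ := Function.ne_iff.mp (by simpa using hM.ne hu : M *ᵥ u ≠ 0)
    rcases hi.lt_or_gt with hi | hi
    · exact ⟨-u, fun v hv => by simp [hperp v hv], i, by simpa [mulVec_neg] using hi⟩
    · exact ⟨u, hperp, i, hi⟩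
  obtain ⟨t, hfeas, i₀, hi₀, htight⟩ := exists_ratio_test M hx hw
  have hstay : ∀ i, (M *ᵥ x) i = c i → (M *ᵥ (x + t • w)) i = c i := fun i hi => by
    have : (M *ᵥ w) i = 0 := by
      rw [hrow]; exact hwperp _ (Submodule.subset_span ⟨⟨i, hi⟩, rfl⟩)
    simp [mulVec_add, mulVec_smul, hi, this]
  refine ⟨x + t • w, hfeas,
    SetLike.lt_iff_le_and_exists.mpr ⟨?_, M i₀, ?_, fun h => ?_⟩⟩
  · exact Submodule.span_mono (Set.range_subset_iff.mpr fun i => ⟨⟨i, hstay i i.2⟩, rfl⟩)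
  · exact Submodule.subset_span ⟨⟨i₀, htight⟩, rfl⟩
  · rw [hrow, hwperp _ h] at hi₀
    exact hi₀.false

lemma exists_tightRowSpan_eq_top [Fintype ι] [DecidableEq κ] (M : Matrix ι κ 𝕜)
    (hM : Function.Injective M.mulVec) {c : ι → 𝕜} {x : κ → 𝕜} (hx : M *ᵥ x ≤ c) :
    ∃ y, M *ᵥ y ≤ c ∧ tightRowSpan M c y = ⊤ := by
  obtain ⟨_, ⟨y, hy, rfl⟩, hmax⟩ :=
    wellFounded_gt.has_min (tightRowSpan M c '' {y | M *ᵥ y ≤ c}) ⟨_, x, hx, rfl⟩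
  refine ⟨y, hy, by_contra fun hspan => ?_⟩
  obtain ⟨y', hy', hlt⟩ := exists_tightRowSpan_lt M hM hy hspan
  exact hmax _ ⟨y', hy', rfl⟩ hlt

lemma exists_intCast_eq_of_tightRowSpan_eq_top {K : Type*} [Field K] {M : Matrix ι κ ℤ}
    (hM : M.IsTotallyUnimodular) {c : ι → ℤ} {x : κ → K}
    (hx : tightRowSpan (M.map (Int.cast : ℤ → K)) (Int.cast ∘ c) x = ⊤) :
    ∃ z : κ → ℤ, Int.cast ∘ z = x := by
  classical
  obtain ⟨g, hg⟩ := exists_linearIndependent_comp_of_span_eq_top _ hx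
  set B := M.submatrix (fun k => (g k).1) id
  have hBK : IsUnit (B.map (Int.cast : ℤ → K)) := linearIndependent_rows_iff_isUnit.mp hg
  have hdet : B.det ≠ 0 := fun h => by
    simpa [← Int.cast_det, h] using ((isUnit_iff_isUnit_det _).mp hBK).ne_zero
  have hB : IsUnit B :=
    (isUnit_iff_isUnit_det B).mpr ((hM.submatrix _ id).isUnit_det_of_ne_zero hdet)
  obtain ⟨z, hz⟩ := mulVec_surjective_iff_isUnit.mpr hB fun k => c (g k)
  refine ⟨z, mulVec_injective_iff_isUnit.mpr hBK ?_⟩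
  rw [map_intCast_mulVec, hz]
  ext k
  exact (g k).2.symm

theorem exists_int_mulVec_le_of_isTotallyUnimodular [Fintype ι] [DecidableEq κ]
    {M : Matrix ι κ ℤ} (hM : M.IsTotallyUnimodular)
    (hinj : Function.Injective (M.map (Int.cast : ℤ → 𝕜)).mulVec) {c : ι → ℤ}
    {x : κ → 𝕜} (hx : M.map Int.cast *ᵥ x ≤ Int.cast ∘ c) : ∃ z : κ → ℤ, M *ᵥ z ≤ c := by
  obtain ⟨y, hy, hspan⟩ := exists_tightRowSpan_eq_top _ hinj hx
  obtain ⟨z, rfl⟩ := exists_intCast_eq_of_tightRowSpan_eq_top hM hspan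
  refine ⟨z, fun i => ?_⟩
  simpa [map_intCast_mulVec] using hy i

end Polyhedra

/-- If `A` is totally unimodular and `b` integral, then
`{z : A z ≤ b, z ≥ 0}` is nonempty iff it contains an integer point. -/
theorem stmt_2 {m n : ℕ} (A : Matrix (Fin m) (Fin n) ℤ)
    (hTU : A.IsTotallyUnimodular) (b : Fin m → ℤ) :
    (∃ z : Fin n → ℝ, (∀ j, 0 ≤ z j) ∧
        ∀ i, (A.map (Int.cast : ℤ → ℝ)).mulVec z i ≤ (b i : ℝ)) ↔
    (∃ z : Fin n → ℤ, (∀ j, 0 ≤ z j) ∧ ∀ i, A.mulVec z i ≤ b i) := by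
  set M : Matrix (Fin m ⊕ Fin n) (Fin n) ℤ := fromRows A (-1)
  have hmap : M.map (Int.cast : ℤ → ℝ) = fromRows (A.map Int.cast) (-1) := by
    rw [fromRows_map, Matrix.map_neg _ Int.cast_neg, Matrix.map_one _ Int.cast_zero Int.cast_one]
  constructor
  · rintro ⟨x, hx0, hxA⟩
    have hx : M.map Int.cast *ᵥ x ≤ Int.cast ∘ Sum.elim b 0 := by
      rw [hmap]
      convert (fromRows_neg_one_mulVec_le_iff _ _ x).mpr ⟨hxA, hx0⟩ using 1
      ext (_ | _) <;> simp
    obtain ⟨z, hz⟩ := exists_int_mulVec_le_of_isTotallyUnimodular hTU.fromRows_neg_one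
      (by rw [hmap]; exact fromRows_neg_one_mulVec_injective _) hx
    obtain ⟨hzA, hz0⟩ := (fromRows_neg_one_mulVec_le_iff A b z).mp hz
    exact ⟨z, hz0, hzA⟩
  · rintro ⟨z, hz0, hzA⟩
    refine ⟨Int.cast ∘ z, fun j => by simpa using hz0 j, fun i => ?_⟩
    simpa [map_intCast_mulVec] using hzA i
end

section
/- Given a feasible strategic MMU operation plan m whose induced assignment sends the unsteerable demand of each origin to its closest operating facility, and given the worst-case demands over interval uncertainty sets (d_v = beta_v, u_v = tau_v), m is robust feasible for all realizations (xi, eta) with alpha_v <= xi_v <= beta_v and sigma_v <= eta_v <= tau_v. Conversely, robust feasibility over the interval uncertainty sets implies feasibility for the worst-case demands. -/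
open Finset

/-!
Only monotonicity is needed: the worst-case demands `(β, τ)` dominate every realization, and a
feasible assignment for larger demands can be trimmed origin by origin (keeping each entry below
the old one) to an assignment for smaller demands, which can only lower every facility's load.
-/

theorem Finset.exists_le_sum_eq_of_le_sum {κ : Type*} [DecidableEq κ] (s : Finset κ) (g : κ → ℕ)
    {t : ℕ} (ht : t ≤ ∑ k ∈ s, g k) : ∃ g' ≤ g, ∑ k ∈ s, g' k = t := by
  induction s using Finset.induction_on generalizing t with
  | empty => exact ⟨0, fun _ => Nat.zero_le _, by simp_all⟩
  | @insert a s ha ih =>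
    rw [sum_insert ha] at ht
    obtain ⟨g', hg'g, hg'sum⟩ := ih (t := t - min t (g a)) (by omega)
    refine ⟨Function.update g' a (min t (g a)), fun k => ?_, ?_⟩
    · rcases eq_or_ne k a with rfl | hka
      · simp
      · simpa [hka] using hg'g k
    · rw [sum_insert ha, Function.update_self, sum_update_of_notMem ha, hg'sum]
      omega

section Feasibility

variable {V K : Type*} [Fintype V] [DecidableEq K]

/-- `f v k` is the steerable demand of origin `v` sent to facility `k ∈ N v`; the unsteerable
demand `u v` goes to the facility `φ v`, and each facility `k` has capacity `cap k`. -/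
def IsFeasible (N : V → Finset K) (φ : V → K) (cap : K → ℕ) (d u : V → ℕ) : Prop :=
  ∃ f : V → K → ℕ, (∀ v k, k ∉ N v → f v k = 0) ∧ (∀ v, ∑ k ∈ N v, f v k = d v) ∧
    ∀ k, (∑ v ∈ univ.filter (fun v => φ v = k), u v) +
        (∑ v ∈ univ.filter (fun v => k ∈ N v), f v k) ≤ cap k

theorem IsFeasible.mono {N : V → Finset K} {φ : V → K} {cap : K → ℕ} {d u d' u' : V → ℕ}
    (h : IsFeasible N φ cap d u) (hd : d' ≤ d) (hu : u' ≤ u) : IsFeasible N φ cap d' u' := by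
  obtain ⟨f, hf_supp, hf_sum, hf_cap⟩ := h
  choose f' hf'f hf'_sum using fun v =>
    (N v).exists_le_sum_eq_of_le_sum (f v) ((hd v).trans (hf_sum v).ge)
  refine ⟨f', fun v k hk => Nat.eq_zero_of_le_zero (hf_supp v k hk ▸ hf'f v k), hf'_sum,
    fun k => (add_le_add ?_ ?_).trans (hf_cap k)⟩
  · exact sum_le_sum fun v _ => hu v
  · exact sum_le_sum fun v _ => hf'f v k

end Feasibility

theorem stmt_10_general {V L P : Type*} [Fintype V] [DecidableEq L] [DecidableEq P]
    (N : V → Finset (L ⊕ P))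
    (bhat : ℕ) (bbar : P → ℕ)
    (m : L → ℕ)
    (φ : V → L ⊕ P)
    (α β σ τ : V → ℕ) (hαβ : ∀ v, α v ≤ β v) (hστ : ∀ v, σ v ≤ τ v) :
    (∃ f : V → L ⊕ P → ℕ, (∀ v k, k ∉ N v → f v k = 0) ∧
        (∀ v, ∑ k ∈ N v, f v k = β v) ∧
        (∀ k, (∑ v ∈ univ.filter (fun v => φ v = k), τ v) +
            (∑ v ∈ univ.filter (fun v => k ∈ N v), f v k) ≤
          Sum.elim (fun l => bhat * m l) bbar k)) ↔
    (∀ ξ η : V → ℕ, (∀ v, α v ≤ ξ v ∧ ξ v ≤ β v) → (∀ v, σ v ≤ η v ∧ η v ≤ τ v) →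
      ∃ f : V → L ⊕ P → ℕ, (∀ v k, k ∉ N v → f v k = 0) ∧
        (∀ v, ∑ k ∈ N v, f v k = ξ v) ∧
        (∀ k, (∑ v ∈ univ.filter (fun v => φ v = k), η v) +
            (∑ v ∈ univ.filter (fun v => k ∈ N v), f v k) ≤
          Sum.elim (fun l => bhat * m l) bbar k)) := by
  change IsFeasible N φ _ β τ ↔ ∀ ξ η, _ → _ → IsFeasible N φ _ ξ η
  refine ⟨fun h ξ η hξ hη => h.mono (fun v => (hξ v).2) (fun v => (hη v).2), fun h => ?_⟩
  exact h β τ (fun v => ⟨hαβ v, le_rfl⟩) (fun v => ⟨hστ v, le_rfl⟩)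

/-- A strategic MMU operation plan `m` (with unsteerable demands
routed by `φ` to the closest operating facility) is feasible for the worst-case
interval demands `(β, τ)` iff it is robust feasible for every realization
`(ξ, η)` in the interval uncertainty sets. -/
theorem stmt_10 {V L P : Type*} [Fintype V] [DecidableEq V] [DecidableEq L] [DecidableEq P]
    (N : V → Finset (L ⊕ P)) (dist : V → L ⊕ P → ℕ)
    (b : L → ℕ) (bhat : ℕ) (bbar : P → ℕ)
    (m : L → ℕ) (hm : ∀ l, m l ≤ b l)
    (φ : V → L ⊕ P)
    (hφmem : ∀ v, φ v ∈ N v)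
    (hφop : ∀ v, Sum.elim (fun l => 0 < m l) (fun _ => True) (φ v))
    (hφmin : ∀ v, ∀ k ∈ N v, Sum.elim (fun l => 0 < m l) (fun _ => True) k →
      dist v (φ v) ≤ dist v k)
    (α β σ τ : V → ℕ) (hαβ : ∀ v, α v ≤ β v) (hστ : ∀ v, σ v ≤ τ v) :
    (∃ f : V → L ⊕ P → ℕ, (∀ v k, k ∉ N v → f v k = 0) ∧
        (∀ v, ∑ k ∈ N v, f v k = β v) ∧
        (∀ k, (∑ v ∈ univ.filter (fun v => φ v = k), τ v) +
            (∑ v ∈ univ.filter (fun v => k ∈ N v), f v k) ≤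
          Sum.elim (fun l => bhat * m l) bbar k)) ↔
    (∀ ξ η : V → ℕ, (∀ v, α v ≤ ξ v ∧ ξ v ≤ β v) → (∀ v, σ v ≤ η v ∧ η v ≤ τ v) →
      ∃ f : V → L ⊕ P → ℕ, (∀ v k, k ∉ N v → f v k = 0) ∧
        (∀ v, ∑ k ∈ N v, f v k = ξ v) ∧
        (∀ k, (∑ v ∈ univ.filter (fun v => φ v = k), η v) +
            (∑ v ∈ univ.filter (fun v => k ∈ N v), f v k) ≤
          Sum.elim (fun l => bhat * m l) bbar k)) :=
  stmt_10_general N bhat bbar m φ α β σ τ hαβ hστ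
end

section
/- The robust feasibility condition 'for all U subset V: max over xi in U1 of sum_{v in U} xi_v + max over eta in U2 of sum_{k in N(U)} sum_{v in N(k)} eta_v w_{vk} <= sum_{l in N_L(U)} b_hat x_l + sum_{p in N_P(U)} bbar_p' holds if and only if for every pair of realizations (xi, eta) in U1 x U2 the corresponding transportation system (with steerable demands xi and residual capacities reduced by eta according to w) is feasible. -/
/-!
For fixed `(ξ, η)` the system is a bipartite supply problem with demands `ξ` and capacities
`c k - r_η k`, where `c = Sum.elim (bhat * x ·) bbar` and `r_η k` is the unsteerable demand
that `φ` sends to `k`. By the weighted Hall theorem it is feasible iff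
`∑_{v ∈ U} ξ v + ∑_{k ∈ N(U)} r_η k ≤ ∑_{k ∈ N(U)} c k` for all `U`, and `∑_{k ∈ N(U)} r_η k`
is exactly the unsteerable demand aimed at `N(U)`. The robust condition asks for this with the
worst `ξ` and the worst `η`, and a sum of maxima over two nonempty sets is the maximum over pairs.
-/

open Finset

section Flow

variable {V K : Type*} [Fintype V] [DecidableEq K] (N : V → Finset K)

theorem sum_le_sum_biUnion_of_flow {d : V → ℕ} {z : V → K → ℕ}
    (hz : ∀ v k, k ∉ N v → z v k = 0) (hd : ∀ v, d v ≤ ∑ k ∈ N v, z v k) (U : Finset V) :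
    ∑ v ∈ U, d v ≤ ∑ k ∈ U.biUnion N, ∑ v with k ∈ N v, z v k :=
  calc ∑ v ∈ U, d v
      ≤ ∑ v ∈ U, ∑ k ∈ N v, z v k := sum_le_sum fun v _ => hd v
    _ = ∑ v ∈ U, ∑ k ∈ U.biUnion N, z v k := sum_congr rfl fun v hv =>
        sum_subset (subset_biUnion_of_mem N hv) fun k _ hk => hz v k hk
    _ = ∑ k ∈ U.biUnion N, ∑ v ∈ U, z v k := sum_comm
    _ ≤ ∑ k ∈ U.biUnion N, ∑ v with k ∈ N v, z v k := sum_le_sum fun k _ => by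
        rw [← sum_filter_of_ne fun v _ hzv => by_contra fun hk => hzv (hz v k hk)]
        exact sum_le_sum_of_subset (filter_subset_filter _ (subset_univ U))

/-- Split each origin `v` into `d v` unit demands and each `k` into `c k` unit slots, and apply
Hall's marriage theorem to the resulting bipartite graph. -/
theorem exists_flow_of_hall (c : K → ℕ) (d : V → ℕ)
    (hall : ∀ U : Finset V, ∑ v ∈ U, d v ≤ ∑ k ∈ U.biUnion N, c k) :
    ∃ z : V → K → ℕ, (∀ v k, k ∉ N v → z v k = 0) ∧ (∀ v, d v ≤ ∑ k ∈ N v, z v k) ∧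
      ∀ k, ∑ v with k ∈ N v, z v k ≤ c k := by
  classical
  let slots : (Σ v, Fin (d v)) → Finset (Σ _ : K, ℕ) := fun x => (N x.1).sigma fun k => range (c k)
  have hslots : ∀ s, #s ≤ #(s.biUnion slots) := by
    intro s
    have hbiUnion :
        s.biUnion slots = ((s.image Sigma.fst).biUnion N).sigma fun k => range (c k) := by
      ext ⟨k, j⟩
      simp only [slots, mem_biUnion, mem_sigma, mem_range, Sigma.exists, exists_and_right,
        mem_image, exists_eq_right]
      aesop
    calc #s ≤ #((s.image Sigma.fst).sigma fun v => (univ : Finset (Fin (d v)))) :=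
          card_le_card fun x hx => by simpa using ⟨x.2, hx⟩
      _ = ∑ v ∈ s.image Sigma.fst, d v := by simp [card_sigma]
      _ ≤ ∑ k ∈ (s.image Sigma.fst).biUnion N, c k := hall _
      _ = #(s.biUnion slots) := by simp [hbiUnion, card_sigma]
  obtain ⟨f, hf_inj, hf⟩ := (all_card_le_biUnion_card_iff_exists_injective slots).mp hslots
  have hfN : ∀ x, (f x).1 ∈ N x.1 := fun x => (mem_sigma.mp (hf x)).1
  refine ⟨fun v k => #{i : Fin (d v) | (f ⟨v, i⟩).1 = k}, fun v k hk => ?_, fun v => ?_,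
    fun k => ?_⟩
  · exact card_eq_zero.mpr (filter_eq_empty_iff.mpr fun i _ hik => hk (hik ▸ hfN ⟨v, i⟩))
  · exact ((card_fin _).symm.trans (card_eq_sum_card_fiberwise fun i _ => hfN ⟨v, i⟩)).le
  · calc ∑ v with k ∈ N v, #{i : Fin (d v) | (f ⟨v, i⟩).1 = k}
        = #((univ.filter (k ∈ N ·)).sigma fun v => {i : Fin (d v) | (f ⟨v, i⟩).1 = k}) :=
          (card_sigma _ _).symm
      _ ≤ #(({k} : Finset K).sigma fun k => range (c k)) :=
          card_le_card_of_injOn f (fun x hx => by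
            have hfk : (f x).1 = k := (mem_filter.mp (mem_sigma.mp hx).2).2
            have hslot := (mem_sigma.mp (hf x)).2
            rw [mem_coe, mem_sigma, mem_singleton]
            exact ⟨hfk, hfk ▸ hslot⟩) hf_inj.injOn
      _ = c k := by simp

theorem hall_iff_exists_flow (c : K → ℕ) (d : V → ℕ) :
    (∀ U : Finset V, ∑ v ∈ U, d v ≤ ∑ k ∈ U.biUnion N, c k) ↔
      ∃ z : V → K → ℕ, (∀ v k, k ∉ N v → z v k = 0) ∧ (∀ v, d v ≤ ∑ k ∈ N v, z v k) ∧
        ∀ k, ∑ v with k ∈ N v, z v k ≤ c k :=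
  ⟨exists_flow_of_hall N c d, fun ⟨_, hz, hd, hc⟩ U =>
    (sum_le_sum_biUnion_of_flow N hz hd U).trans (sum_le_sum fun k _ => hc k)⟩

theorem hall_residual_iff_exists_flow {r c : K → ℕ} (hrc : ∀ k, r k ≤ c k) (d : V → ℕ) :
    (∀ U : Finset V, ∑ v ∈ U, d v + ∑ k ∈ U.biUnion N, r k ≤ ∑ k ∈ U.biUnion N, c k) ↔
      ∃ z : V → K → ℕ, (∀ v k, k ∉ N v → z v k = 0) ∧ (∀ v, d v ≤ ∑ k ∈ N v, z v k) ∧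
        ∀ k, r k + ∑ v with k ∈ N v, z v k ≤ c k := by
  have hsub (U : Finset V) :
      ∑ k ∈ U.biUnion N, (c k - r k) = ∑ k ∈ U.biUnion N, c k - ∑ k ∈ U.biUnion N, r k :=
    sum_tsub_distrib _ fun k _ => hrc k
  simp_rw [← le_tsub_iff_left (hrc _), ← hall_iff_exists_flow, hsub]
  exact forall_congr' fun U => (le_tsub_iff_right (sum_le_sum fun k _ => hrc k)).symm

end Flow

theorem stmt_11_general {V L P : Type*} [Fintype V] [DecidableEq L] [DecidableEq P]
    (N : V → Finset (L ⊕ P)) (x : L → ℕ) (bhat : ℕ) (bbar : P → ℕ)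
    (φ : V → L ⊕ P)
    (U1 U2 : Finset (V → ℕ)) (hU1 : U1.Nonempty) (hU2 : U2.Nonempty)
    (hres : ∀ η ∈ U2, ∀ k, (∑ v ∈ univ.filter (fun v => φ v = k), η v) ≤
      Sum.elim (fun l => bhat * x l) bbar k) :
    (∀ U : Finset V,
        U1.sup (fun ξ => ∑ v ∈ U, ξ v) +
          U2.sup (fun η => ∑ v ∈ univ.filter (fun v => φ v ∈ U.biUnion N), η v) ≤
        ∑ k ∈ U.biUnion N, Sum.elim (fun l => bhat * x l) bbar k) ↔
    (∀ ξ ∈ U1, ∀ η ∈ U2,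
      ∃ z : V → L ⊕ P → ℕ, (∀ v k, k ∉ N v → z v k = 0) ∧
        (∀ v, ξ v ≤ ∑ k ∈ N v, z v k) ∧
        (∀ k, (∑ v ∈ univ.filter (fun v => φ v = k), η v) +
            (∑ v ∈ univ.filter (fun v => k ∈ N v), z v k) ≤
          Sum.elim (fun l => bhat * x l) bbar k)) := by
  have hfiber (η : V → ℕ) (U : Finset V) :
      ∑ v ∈ univ.filter (fun v => φ v ∈ U.biUnion N), η v =
        ∑ k ∈ U.biUnion N, ∑ v ∈ univ.filter (fun v => φ v = k), η v :=
    (sum_fiberwise_eq_sum_filter _ _ _ _).symm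
  simp_rw [sup_add_sup hU1 hU2, Finset.sup_le_iff, hfiber]
  refine ⟨fun h ξ hξ η hη => ?_, fun h U p hp => ?_⟩
  · exact (hall_residual_iff_exists_flow N (hres η hη) ξ).mp
      fun U => h U (ξ, η) (mem_product.mpr ⟨hξ, hη⟩)
  · obtain ⟨hξ, hη⟩ := mem_product.mp hp
    exact (hall_residual_iff_exists_flow N (hres p.2 hη) p.1).mpr (h p.1 hξ p.2 hη) U

/-- The robust Benders feasibility cuts (with worst cases over
the uncertainty sets `U1`, `U2`) hold for every `U ⊆ V` iff for every pair of
realizations `(ξ, η) ∈ U1 × U2` the corresponding transportation system (with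
steerable demands `ξ` and capacities reduced by the unsteerable demands `η`
routed according to `φ`) is feasible. -/
theorem stmt_11 {V L P : Type*} [Fintype V] [DecidableEq V] [DecidableEq L] [DecidableEq P]
    (N : V → Finset (L ⊕ P)) (x : L → ℕ) (bhat : ℕ) (bbar : P → ℕ)
    (φ : V → L ⊕ P) (hφ : ∀ v, φ v ∈ N v)
    (U1 U2 : Finset (V → ℕ)) (hU1 : U1.Nonempty) (hU2 : U2.Nonempty)
    (hres : ∀ η ∈ U2, ∀ k, (∑ v ∈ univ.filter (fun v => φ v = k), η v) ≤
      Sum.elim (fun l => bhat * x l) bbar k) :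
    (∀ U : Finset V,
        U1.sup (fun ξ => ∑ v ∈ U, ξ v) +
          U2.sup (fun η => ∑ v ∈ univ.filter (fun v => φ v ∈ U.biUnion N), η v) ≤
        ∑ k ∈ U.biUnion N, Sum.elim (fun l => bhat * x l) bbar k) ↔
    (∀ ξ ∈ U1, ∀ η ∈ U2,
      ∃ z : V → L ⊕ P → ℕ, (∀ v k, k ∉ N v → z v k = 0) ∧
        (∀ v, ξ v ≤ ∑ k ∈ N v, z v k) ∧
        (∀ k, (∑ v ∈ univ.filter (fun v => φ v = k), η v) +
            (∑ v ∈ univ.filter (fun v => k ∈ N v), z v k) ≤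
          Sum.elim (fun l => bhat * x l) bbar k)) :=
  stmt_11_general N x bhat bbar φ U1 U2 hU1 hU2 hres
end

section
/- Reduction correctness (forward direction): given a subset sum instance (a_1,...,a_n; B) with a subset A' summing to B, the set U = {v : a_v in A'} satisfies min( sum_{v in U} 2 a_v, 2B ) > sum_{p in N(U)} bbar_p, where N(U) consists of the private practices of origins in U (capacity a_v each) together with the shared practice of capacity B-1. -/
open Finset

theorem Finset.biUnion_pair_inl_inr {α β : Type*} [DecidableEq α] [DecidableEq β]
    {s : Finset α} (hs : s.Nonempty) (b : β) :
    s.biUnion (fun a => ({Sum.inl a, Sum.inr b} : Finset (α ⊕ β))) = s.disjSum {b} := by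
  ext (a | b')
  · simp
  · simpa [eq_comm] using fun _ : b = b' => hs.exists_mem

theorem Finset.sum_biUnion_pair_inl_inr {α β M : Type*} [DecidableEq α] [DecidableEq β]
    [AddCommMonoid M] {s : Finset α} (hs : s.Nonempty) (b : β) (f : α ⊕ β → M) :
    ∑ p ∈ s.biUnion (fun a => ({Sum.inl a, Sum.inr b} : Finset (α ⊕ β))), f p =
      ∑ a ∈ s, f (Sum.inl a) + f (Sum.inr b) := by
  rw [biUnion_pair_inl_inr hs, sum_disjSum, sum_singleton]

/-- Reduction correctness, forward direction: if `A'` sums to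
`B`, then `U = A'` violates the separation inequality, i.e.
`min (∑_{v ∈ U} 2 a v) (2B) > ∑_{p ∈ N(U)} b̄_p`. -/
theorem stmt_14 (n : ℕ) (a : Fin n → ℕ) (B : ℕ) (hB : 1 ≤ B)
    (A' : Finset (Fin n)) (hA : ∑ v ∈ A', a v = B) :
    (∑ p ∈ A'.biUnion (fun v => ({Sum.inl v, Sum.inr ()} : Finset (Fin n ⊕ Unit))),
        Sum.elim a (fun _ => B - 1) p) <
      min (∑ v ∈ A', 2 * a v) (2 * B) := by
  have hne : A'.Nonempty := nonempty_of_sum_ne_zero (by omega : ∑ v ∈ A', a v ≠ 0)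
  rw [sum_biUnion_pair_inl_inr hne, ← mul_sum, hA, min_self]
  simp only [Sum.elim_inl, Sum.elim_inr, hA]
  omega
end

section
/- In any feasible solution to the IP (Det) with at most one facility chosen per origin in w, for every origin v and facility k in N(v): w_{vk} = 1 if and only if k is the closest operating facility to v in N(v). -/
/-!
Since `w v` takes values in `ℕ` and sums to exactly one over `N v`, it is the indicator of a
single facility `k₀`. The constraint `w ≤ y` makes `k₀` operating, and the closeness constraint
of any operating facility strictly closer than `k₀` would have only zero terms, so `k₀` is the
closest operating facility; injectivity of the distance ranking makes that facility unique.
-/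

open Finset

namespace Finset

variable {α : Type*} {s : Finset α} {f : α → ℕ}

theorem exists_eq_one_of_sum_eq_one (h : ∑ i ∈ s, f i = 1) : ∃ i ∈ s, f i = 1 := by
  obtain ⟨i, hi, hfi⟩ := exists_ne_zero_of_sum_ne_zero (h ▸ one_ne_zero : ∑ i ∈ s, f i ≠ 0)
  exact ⟨i, hi, le_antisymm (h ▸ single_le_sum (fun _ _ => Nat.zero_le _) hi)
    (Nat.one_le_iff_ne_zero.mpr hfi)⟩

theorem eq_zero_of_sum_eq_one_of_ne {i j : α} (h : ∑ i ∈ s, f i = 1) (hi : i ∈ s)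
    (hfi : f i = 1) (hj : j ∈ s) (hji : j ≠ i) : f j = 0 := by
  classical
  have hrest : ∑ k ∈ s.erase i, f k = 0 := by
    have := add_sum_erase s f hi
    omega
  exact sum_eq_zero_iff.mp hrest j (mem_erase.mpr ⟨hji, hj⟩)

end Finset

section ClosestAssignment

variable {α : Type*} {s : Finset α} {w r : α → ℕ} {op : α → Prop}

theorem eq_one_iff_forall_rank_le (hr : Set.InjOn r s) (hsum : ∑ k ∈ s, w k = 1)
    (hop : ∀ k ∈ s, w k = 1 → op k)
    (hclose : ∀ k ∈ s, op k → 1 ≤ w k + ∑ j ∈ s.filter (fun j => r j < r k), w j)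
    {k : α} (hk : k ∈ s) : w k = 1 ↔ op k ∧ ∀ j ∈ s, op j → r k ≤ r j := by
  obtain ⟨k₀, hk₀, hwk₀⟩ := exists_eq_one_of_sum_eq_one hsum
  have hzero : ∀ j ∈ s, j ≠ k₀ → w j = 0 := fun j hj hne =>
    eq_zero_of_sum_eq_one_of_ne hsum hk₀ hwk₀ hj hne
  have hmin : ∀ j ∈ s, op j → r k₀ ≤ r j := by
    intro j hj hopj
    by_contra! hlt
    have hcloser : ∑ i ∈ s.filter (fun i => r i < r j), w i = 0 :=
      sum_eq_zero fun i hi => hzero i (mem_filter.mp hi).1 <| by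
        rintro rfl
        exact (mem_filter.mp hi).2.not_gt hlt
    have := hclose j hj hopj
    have := hzero j hj (by rintro rfl; exact lt_irrefl _ hlt)
    omega
  constructor
  · intro hwk
    obtain rfl : k = k₀ := by
      by_contra hne
      have := hzero k hk hne
      omega
    exact ⟨hop k hk hwk, hmin⟩
  · rintro ⟨hopk, hkmin⟩
    obtain rfl : k = k₀ :=
      hr hk hk₀ (le_antisymm (hkmin k₀ hk₀ (hop k₀ hk₀ hwk₀)) (hmin k hk hopk))
    exact hwk₀

end ClosestAssignment

section Facilities

variable {L P : Type*} {s : Finset (L ⊕ P)} {y : L → ℕ} {w rank : L ⊕ P → ℕ}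

/-- Sites are `Sum.inl`, practices `Sum.inr`; a site `l` operates when `y l = 1`. -/
def IsOperating (y : L → ℕ) : L ⊕ P → Prop :=
  Sum.elim (fun l => y l = 1) (fun _ => True)

theorem isOperating_of_eq_one (hy : ∀ l, y l ≤ 1)
    (hwy : ∀ l, Sum.inl l ∈ s → w (Sum.inl l) ≤ y l) :
    ∀ k ∈ s, w k = 1 → IsOperating y k
  | Sum.inl l, hl, hwl => by
    have := hy l
    have := hwy l hl
    change y l = 1
    omega
  | Sum.inr _, _, _ => trivial

theorem one_le_add_sum_closer
    (hclosel : ∀ l, Sum.inl l ∈ s →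
      y l ≤ w (Sum.inl l) + ∑ k ∈ s.filter (fun k => rank k < rank (Sum.inl l)), w k)
    (hclosep : ∀ p, Sum.inr p ∈ s →
      1 ≤ w (Sum.inr p) + ∑ k ∈ s.filter (fun k => rank k < rank (Sum.inr p)), w k) :
    ∀ k ∈ s, IsOperating y k → 1 ≤ w k + ∑ j ∈ s.filter (fun j => rank j < rank k), w j
  | Sum.inl l, hl, hyl => (show y l = 1 from hyl) ▸ hclosel l hl
  | Sum.inr p, hp, _ => hclosep p hp

end Facilities

theorem stmt_16_general {V L P : Type*}
    (N : V → Finset (L ⊕ P)) (rank : V → L ⊕ P → ℕ)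
    (hrank : ∀ v, ∀ k ∈ N v, ∀ k' ∈ N v, rank v k = rank v k' → k = k')
    (y : L → ℕ) (w : V → L ⊕ P → ℕ)
    (hy : ∀ l, y l ≤ 1)
    (hcover : ∀ v, 1 ≤ ∑ k ∈ N v, w v k)
    (hone : ∀ v, ∑ k ∈ N v, w v k ≤ 1)
    (hwy : ∀ v l, Sum.inl l ∈ N v → w v (Sum.inl l) ≤ y l)
    (hclosel : ∀ v l, Sum.inl l ∈ N v →
      y l ≤ w v (Sum.inl l) +
        ∑ k ∈ (N v).filter (fun k => rank v k < rank v (Sum.inl l)), w v k)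
    (hclosep : ∀ v p, Sum.inr p ∈ N v →
      1 ≤ w v (Sum.inr p) +
        ∑ k ∈ (N v).filter (fun k => rank v k < rank v (Sum.inr p)), w v k) :
    ∀ v, ∀ k ∈ N v,
      (w v k = 1 ↔
        (Sum.elim (fun l => y l = 1) (fun _ => True) k ∧
          ∀ k' ∈ N v, Sum.elim (fun l => y l = 1) (fun _ => True) k' →
            rank v k ≤ rank v k')) := by
  intro v k hk
  exact eq_one_iff_forall_rank_le (op := IsOperating y)
    (fun a ha b hb => hrank v a ha b hb) (le_antisymm (hone v) (hcover v))
    (isOperating_of_eq_one hy (hwy v)) (one_le_add_sum_closer (hclosel v) (hclosep v)) hk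

/-- In any feasible solution to (Det) with at most one targeted
facility per origin, `w v k = 1` iff `k` is the closest operating facility to
`v` in `N v`.  Here `rank v` encodes the distance ordering `π_v` of `N v`
(injective on `N v`), and a facility is operating if it is a practice or a set
up site. -/
theorem stmt_16 {V L P : Type*} [Fintype V] [DecidableEq L] [DecidableEq P]
    (N : V → Finset (L ⊕ P)) (rank : V → L ⊕ P → ℕ)
    (hrank : ∀ v, ∀ k ∈ N v, ∀ k' ∈ N v, rank v k = rank v k' → k = k')
    (y : L → ℕ) (w : V → L ⊕ P → ℕ)
    (hy : ∀ l, y l ≤ 1) (hw : ∀ v k, w v k ≤ 1)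
    (hcover : ∀ v, 1 ≤ ∑ k ∈ N v, w v k)
    (hone : ∀ v, ∑ k ∈ N v, w v k ≤ 1)
    (hwy : ∀ v l, Sum.inl l ∈ N v → w v (Sum.inl l) ≤ y l)
    (hclosel : ∀ v l, Sum.inl l ∈ N v →
      y l ≤ w v (Sum.inl l) +
        ∑ k ∈ (N v).filter (fun k => rank v k < rank v (Sum.inl l)), w v k)
    (hclosep : ∀ v p, Sum.inr p ∈ N v →
      1 ≤ w v (Sum.inr p) +
        ∑ k ∈ (N v).filter (fun k => rank v k < rank v (Sum.inr p)), w v k)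
    (hop : ∀ v, ∃ k ∈ N v, Sum.elim (fun l => y l = 1) (fun _ => True) k) :
    ∀ v, ∀ k ∈ N v,
      (w v k = 1 ↔
        (Sum.elim (fun l => y l = 1) (fun _ => True) k ∧
          ∀ k' ∈ N v, Sum.elim (fun l => y l = 1) (fun _ => True) k' →
            rank v k ≤ rank v k')) :=
  stmt_16_general N rank hrank y w hy hcover hone hwy hclosel hclosep
end
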